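/- arXiv:2207.00036 — 2 statements merged into one kernel-verified Lean document; each statement's English description precedes it below -/
import Mathlib

section
/- Given the class of 2023 previous company enrollments [37,35,38,37,38,35,37,38,39,36,39,40,40,36,33,37,38,39,33,36,37,36,36,35,35,37,34,38,33,35], the total enrollment is 1097 and ∑_c max(n_c − 29, 0) = 227. Hence any reassignment in which no student stays in their previous company creates at least 227 pairs of students from a common previous company assigned to the same new company. -/
theorem stmt13 (enroll : Fin 30 → ℕ)
    (hE : List.ofFn enroll =
      [37,35,38,37,38,35,37,38,39,36,39,40,40,36,33,37,38,39,33,36,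
       37,36,36,35,35,37,34,38,33,35]) :
    (∑ c, enroll c = 1097) ∧ (∑ c, max (enroll c - 29) 0 = 227) ∧
    (∀ (A : Type) [Fintype A] [DecidableEq A] (prev f : A → Fin 30),
      (∀ c : Fin 30, ((Finset.univ : Finset A).filter (fun a => prev a = c)).card = enroll c) →
      (∀ a, f a ≠ prev a) →
      227 ≤ (((Finset.univ : Finset A).powersetCard 2).filter
        (fun s => (∃ c : Fin 30, ∀ a ∈ s, prev a = c) ∧
                  (∃ c : Fin 30, ∀ a ∈ s, f a = c))).card) := by
  have hsum : ∑ c, enroll c = 1097 := by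
    have h := congrArg List.sum hE
    rw [List.sum_ofFn] at h
    norm_num at h
    exact h
  have hsub : ∑ c, (enroll c - 29) = 227 := by
    have h := congrArg (fun l => (l.map (fun x => x - 29)).sum) hE
    simp only [List.map_ofFn, Function.comp] at h
    rw [List.sum_ofFn] at h
    norm_num at h
    exact h
  refine ⟨hsum, ?_, ?_⟩
  · simpa only [Nat.max_zero] using hsub
  · intro A _ _ prev f hcard hne
    classical
    set T := ((Finset.univ : Finset A).powersetCard 2).filter
        (fun s => (∃ c : Fin 30, ∀ a ∈ s, prev a = c) ∧
                  (∃ c : Fin 30, ∀ a ∈ s, f a = c)) with hT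
    set fib : Fin 30 → Fin 30 → Finset A := fun c d =>
      Finset.univ.filter (fun a => prev a = c ∧ f a = d) with hfib
    have hsubT : ((Finset.univ : Finset (Fin 30 × Fin 30)).biUnion
        (fun p => (fib p.1 p.2).powersetCard 2)) ⊆ T := by
      intro s hs
      simp only [Finset.mem_biUnion, Finset.mem_univ, true_and] at hs
      obtain ⟨p, hp⟩ := hs
      rw [Finset.mem_powersetCard] at hp
      rw [hT, Finset.mem_filter, Finset.mem_powersetCard]
      refine ⟨⟨Finset.subset_univ s, hp.2⟩, ⟨p.1, ?_⟩, ⟨p.2, ?_⟩⟩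
      · intro a ha
        have := hp.1 ha
        simp only [hfib, Finset.mem_filter] at this
        exact this.2.1
      · intro a ha
        have := hp.1 ha
        simp only [hfib, Finset.mem_filter] at this
        exact this.2.2
    have hdisj : ∀ p ∈ (Finset.univ : Finset (Fin 30 × Fin 30)),
        ∀ q ∈ (Finset.univ : Finset (Fin 30 × Fin 30)), p ≠ q →
        Disjoint ((fib p.1 p.2).powersetCard 2) ((fib q.1 q.2).powersetCard 2) := by
      intro p _ q _ hpq
      rw [Finset.disjoint_left]
      intro s hsp hsq
      rw [Finset.mem_powersetCard] at hsp hsq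
      obtain ⟨a, ha⟩ : s.Nonempty := by
        rw [← Finset.card_pos, hsp.2]; norm_num
      have h1 := hsp.1 ha
      have h2 := hsq.1 ha
      simp only [hfib, Finset.mem_filter] at h1 h2
      exact hpq (Prod.ext (h1.2.1.symm.trans h2.2.1) (h1.2.2.symm.trans h2.2.2))
    have hcount : ∑ p : Fin 30 × Fin 30, ((fib p.1 p.2).card.choose 2) ≤ T.card := by
      have hb := Finset.card_biUnion hdisj
      calc ∑ p : Fin 30 × Fin 30, ((fib p.1 p.2).card.choose 2)
          = ∑ p : Fin 30 × Fin 30, ((fib p.1 p.2).powersetCard 2).card := by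
            apply Finset.sum_congr rfl
            intro p _
            rw [Finset.card_powersetCard]
        _ = ((Finset.univ : Finset (Fin 30 × Fin 30)).biUnion
              (fun p => (fib p.1 p.2).powersetCard 2)).card := hb.symm
        _ ≤ T.card := Finset.card_le_card hsubT
    have hfib_sum : ∀ c, ∑ d, (fib c d).card = enroll c := by
      intro c
      rw [← hcard c]
      rw [Finset.card_eq_sum_card_fiberwise
        (f := f) (t := (Finset.univ : Finset (Fin 30))) (fun x _ => Finset.mem_univ _)]
      apply Finset.sum_congr rfl
      intro d _
      rw [hfib]
      rw [Finset.filter_filter]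
    have hchoose : ∀ m : ℕ, m ≤ m.choose 2 + 1 := by
      intro m
      match m with
      | 0 => simp
      | 1 => simp
      | (n+2) =>
        have h2 : (n+2).choose 2 = (n+1).choose 1 + (n+1).choose 2 :=
          Nat.choose_succ_succ _ _
        have h3 : (n+1).choose 1 = n+1 := Nat.choose_one_right _
        omega
    have hbound : ∀ c, enroll c - 29 ≤ ∑ d, ((fib c d).card.choose 2) := by
      intro c
      have hcc : (fib c c).card = 0 := by
        rw [Finset.card_eq_zero, hfib, Finset.filter_eq_empty_iff]
        rintro a - ⟨h1, h2⟩
        exact hne a (h2.trans h1.symm)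
      have he : ∑ d ∈ Finset.univ.erase c, (fib c d).card = enroll c := by
        rw [Finset.sum_erase (f := fun d => (fib c d).card) _ hcc, hfib_sum]
      have hle : enroll c ≤ (∑ d ∈ Finset.univ.erase c, ((fib c d).card.choose 2)) + 29 := by
        calc enroll c = ∑ d ∈ Finset.univ.erase c, (fib c d).card := he.symm
          _ ≤ ∑ d ∈ Finset.univ.erase c, (((fib c d).card.choose 2) + 1) :=
              Finset.sum_le_sum (fun d _ => hchoose _)
          _ = (∑ d ∈ Finset.univ.erase c, ((fib c d).card.choose 2)) +
              (Finset.univ.erase c).card := by rw [Finset.sum_add_distrib, Finset.sum_const,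
                smul_eq_mul, mul_one]
          _ = _ := by
              rw [Finset.card_erase_of_mem (Finset.mem_univ c)]
              simp
      have hmono : ∑ d ∈ Finset.univ.erase c, ((fib c d).card.choose 2) ≤
          ∑ d, ((fib c d).card.choose 2) :=
        Finset.sum_le_sum_of_subset (Finset.erase_subset _ _)
      omega
    calc 227 = ∑ c, (enroll c - 29) := hsub.symm
      _ ≤ ∑ c, ∑ d, ((fib c d).card.choose 2) := Finset.sum_le_sum (fun c _ => hbound c)
      _ = ∑ p : Fin 30 × Fin 30, ((fib p.1 p.2).card.choose 2) := by
          rw [Fintype.sum_prod_type]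
      _ ≤ T.card := hcount
end

section
/- Let students be partitioned into 30 previous companies with sizes n_1, …, n_30, each n_c ≤ 58, and suppose each student is reassigned to one of the 29 companies other than their own. Then the total number of unordered pairs of students sharing both a previous company and a new company is at least ∑_c max(n_c − 29, 0), and this bound is attained when additionally every n_c ≥ 29. -/
/-!
A pair of students sharing both their old and their new company is a 2-subset of a fiber of
`a ↦ (prev a, f a)`, so the pairs number `∑_{c, c'} C(k_{c,c'}, 2)` with `k_{c,c'}` the fiber
sizes. Within company `c` the sizes `k_{c,c'}` sum to `n_c` over the 29 companies `c' ≠ c`, and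
`C(k, 2) ≥ k - 1`, so company `c` contributes at least `n_c - 29`. Equality holds when every
`k_{c,c'}` is 1 or 2; sending the `i`-th student of `c` to the `(i mod 29)`-th other company
achieves this exactly when `29 ≤ n_c ≤ 58`.
-/

open Finset

namespace Nat

theorem sub_one_le_choose_two (k : ℕ) : k - 1 ≤ k.choose 2 := by
  cases k with
  | zero => simp
  | succ k => simp [Nat.choose_succ_succ']

theorem choose_two_eq_sub_one {k : ℕ} (hk : k ≤ 2) : k.choose 2 = k - 1 := by
  interval_cases k <;> rfl

end Nat

section Fibers

variable {α β : Type*} [DecidableEq β]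

theorem card_filter_powersetCard_exists_forall_eq [DecidableEq α] [Fintype β] (g : α → β)
    [DecidablePred fun s : Finset α => ∃ b, ∀ a ∈ s, g a = b] (t : Finset α) {k : ℕ} (hk : k ≠ 0) :
    #{s ∈ t.powersetCard k | ∃ b, ∀ a ∈ s, g a = b} = ∑ b, (#{a ∈ t | g a = b}).choose k := by
  have hunion : {s ∈ t.powersetCard k | ∃ b, ∀ a ∈ s, g a = b} =
      univ.biUnion fun b => {a ∈ t | g a = b}.powersetCard k := by
    ext s
    simp only [mem_filter, mem_powersetCard, mem_biUnion, mem_univ, true_and, subset_iff]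
    constructor
    · rintro ⟨⟨hst, hcard⟩, b, hb⟩
      exact ⟨b, fun a ha => ⟨hst ha, hb a ha⟩, hcard⟩
    · rintro ⟨b, hsub, hcard⟩
      exact ⟨⟨fun a ha => (hsub ha).1, hcard⟩, b, fun a ha => (hsub ha).2⟩
  rw [hunion, card_biUnion]
  · simp only [card_powersetCard]
  · intro b _ b' _ hbb'
    refine disjoint_left.mpr fun s hs hs' => ?_
    rw [mem_powersetCard] at hs hs'
    obtain ⟨a, ha⟩ : s.Nonempty := card_pos.mp (hs.2 ▸ Nat.pos_of_ne_zero hk)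
    exact hbb' (((mem_filter.mp (hs.1 ha)).2).symm.trans (mem_filter.mp (hs'.1 ha)).2)

theorem card_filter_powersetCard_exists_forall_eq_and_exists_forall_eq
    {ι κ : Type*} [DecidableEq α] [Fintype α] [Fintype ι] [Fintype κ] [DecidableEq ι]
    [DecidableEq κ]
    (p : α → ι) (q : α → κ)
    [DecidablePred fun s : Finset α => (∃ i, ∀ a ∈ s, p a = i) ∧ (∃ j, ∀ a ∈ s, q a = j)]
    {k : ℕ} (hk : k ≠ 0) :
    #{s ∈ (univ : Finset α).powersetCard k |
        (∃ i, ∀ a ∈ s, p a = i) ∧ (∃ j, ∀ a ∈ s, q a = j)} =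
      ∑ i, ∑ j, (#{a | p a = i ∧ q a = j}).choose k := by
  have hpair : ∀ s : Finset α, ((∃ i, ∀ a ∈ s, p a = i) ∧ (∃ j, ∀ a ∈ s, q a = j)) ↔
      ∃ x : ι × κ, ∀ a ∈ s, (p a, q a) = x := by
    intro s
    simp only [Prod.ext_iff, Prod.exists]
    exact ⟨fun ⟨⟨i, hi⟩, j, hj⟩ => ⟨i, j, fun a ha => ⟨hi a ha, hj a ha⟩⟩,
      fun ⟨i, j, h⟩ => ⟨⟨i, fun a ha => (h a ha).1⟩, j, fun a ha => (h a ha).2⟩⟩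
  calc _ = #{s ∈ (univ : Finset α).powersetCard k | ∃ x : ι × κ, ∀ a ∈ s, (p a, q a) = x} := by
        congr 1; exact filter_congr fun s _ => hpair s
    _ = ∑ x : ι × κ, (#{a | (p a, q a) = x}).choose k :=
        card_filter_powersetCard_exists_forall_eq (fun a => (p a, q a)) univ hk
    _ = _ := by rw [Fintype.sum_prod_type]; simp only [Prod.mk.injEq]

variable {t : Finset α} {u : Finset β}

theorem card_sub_card_le_sum_choose_two (g : α → β) (hg : ∀ a ∈ t, g a ∈ u) :
    #t - #u ≤ ∑ b ∈ u, (#{a ∈ t | g a = b}).choose 2 := by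
  rw [tsub_le_iff_right, card_eq_sum_card_fiberwise hg, card_eq_sum_ones u, ← sum_add_distrib]
  exact sum_le_sum fun b _ => tsub_le_iff_right.mp (Nat.sub_one_le_choose_two _)

theorem sum_choose_two_eq_card_sub_card (g : α → β) (hg : ∀ a ∈ t, g a ∈ u)
    (hfiber : ∀ b ∈ u, #{a ∈ t | g a = b} ∈ Set.Icc 1 2) :
    ∑ b ∈ u, (#{a ∈ t | g a = b}).choose 2 = #t - #u := by
  rw [card_eq_sum_card_fiberwise hg, card_eq_sum_ones u,
    ← sum_tsub_distrib _ fun b hb => (hfiber b hb).1]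
  exact sum_congr rfl fun b hb => Nat.choose_two_eq_sub_one (hfiber b hb).2

theorem card_sub_le_sum_choose_two_of_forall_ne [Fintype β] (g : α → β) (c : β)
    (hg : ∀ a ∈ t, g a ≠ c) :
    #t - (Fintype.card β - 1) ≤ ∑ b, (#{a ∈ t | g a = b}).choose 2 := by
  calc #t - (Fintype.card β - 1) = #t - #(univ.erase c) := by
        rw [card_erase_of_mem (mem_univ c), card_univ]
    _ ≤ ∑ b ∈ univ.erase c, (#{a ∈ t | g a = b}).choose 2 :=
      card_sub_card_le_sum_choose_two g fun a ha => mem_erase.mpr ⟨hg a ha, mem_univ _⟩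
    _ ≤ ∑ b, (#{a ∈ t | g a = b}).choose 2 := sum_le_sum_of_subset (erase_subset c univ)

end Fibers

theorem Finset.card_filter_sigma_fst_eq_and {ι : Type*} {σ : ι → Type*} [Fintype ι]
    [∀ i, Fintype (σ i)] [DecidableEq ι] (i : ι) (P : (Σ i, σ i) → Prop) [DecidablePred P] :
    #{a : Σ i, σ i | a.1 = i ∧ P a} = #{b : σ i | P ⟨i, b⟩} := by
  rw [← card_map (Function.Embedding.sigmaMk i)]
  congr 1
  ext ⟨j, b⟩
  simp only [mem_filter, mem_univ, true_and, mem_map, Function.Embedding.sigmaMk_apply]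
  constructor
  · rintro ⟨rfl, hb⟩
    exact ⟨b, hb, rfl⟩
  · rintro ⟨b, hb, ⟨⟩⟩
    exact ⟨rfl, hb⟩

theorem card_filter_fin_ofNat_eq_mem_Icc {d m : ℕ} [NeZero d] (hdm : d ≤ m) (hmd : m ≤ 2 * d)
    (j : Fin d) : #{i : Fin m | Fin.ofNat d i = j} ∈ Set.Icc 1 2 := by
  constructor
  · refine card_pos.mpr ⟨⟨j, j.isLt.trans_le hdm⟩, ?_⟩
    simp [Fin.ext_iff, Nat.mod_eq_of_lt j.isLt]
  · -- `i ↦ i / d` is injective on the residue class of `j` and takes values in `{0, 1}`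
    refine (card_le_card_of_injOn (fun i : Fin m => (i : ℕ) / d) (t := range 2) ?_ ?_).trans_eq
      (card_range 2)
    · intro i _
      simp only [coe_range, Set.mem_Iio]
      exact (Nat.div_lt_iff_lt_mul (NeZero.pos d)).mpr (by omega)
    · intro i hi i' hi' hdiv
      simp only [coe_filter, mem_univ, true_and, Fin.ext_iff, Fin.val_ofNat] at hi hi' hdiv
      rw [Fin.ext_iff, ← Nat.div_add_mod i d, ← Nat.div_add_mod i' d, hi, hi', hdiv]

theorem sum_choose_two_card_filter_succAbove_ofNat {d m : ℕ} [NeZero d] (hdm : d ≤ m)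
    (hmd : m ≤ 2 * d) (c : Fin (d + 1)) :
    ∑ c', (#{i : Fin m | c.succAbove (Fin.ofNat d i) = c'}).choose 2 = m - d := by
  rw [← add_sum_erase _ _ (mem_univ c)]
  have hown : #{i : Fin m | c.succAbove (Fin.ofNat d i) = c} = 0 :=
    card_eq_zero.mpr (filter_eq_empty_iff.mpr fun i _ => Fin.succAbove_ne c _)
  have hfiber : ∀ c' ∈ univ.erase c,
      #{i : Fin m | c.succAbove (Fin.ofNat d i) = c'} ∈ Set.Icc 1 2 := by
    intro c' hc'
    obtain ⟨j, rfl⟩ := Fin.exists_succAbove_eq (ne_of_mem_erase hc')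
    simp only [Fin.succAbove_right_inj]
    exact card_filter_fin_ofNat_eq_mem_Icc hdm hmd j
  rw [hown, sum_choose_two_eq_card_sub_card _ (fun i _ => mem_erase.mpr
    ⟨Fin.succAbove_ne c _, mem_univ _⟩) hfiber, card_erase_of_mem (mem_univ c)]
  simp

theorem stmt15 (n : Fin 30 → ℕ) (h58 : ∀ c, n c ≤ 58) :
    (∀ (A : Type) [Fintype A] [DecidableEq A] (prev f : A → Fin 30),
      (∀ c : Fin 30, ((Finset.univ : Finset A).filter (fun a => prev a = c)).card = n c) →
      (∀ a, f a ≠ prev a) →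
      ∑ c, max (n c - 29) 0 ≤
        (((Finset.univ : Finset A).powersetCard 2).filter
          (fun s => (∃ c : Fin 30, ∀ a ∈ s, prev a = c) ∧
                    (∃ c : Fin 30, ∀ a ∈ s, f a = c))).card) ∧
    ((∀ c, 29 ≤ n c) →
      ∃ f : (Σ c : Fin 30, Fin (n c)) → Fin 30,
        (∀ a, f a ≠ a.1) ∧
        (((Finset.univ : Finset (Σ c : Fin 30, Fin (n c))).powersetCard 2).filter
          (fun s => (∃ c : Fin 30, ∀ a ∈ s, a.1 = c) ∧
                    (∃ c : Fin 30, ∀ a ∈ s, f a = c))).card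
          = ∑ c, max (n c - 29) 0) := by
  refine ⟨fun A _ _ prev f hn hf => ?_, fun h29 => ?_⟩
  · rw [card_filter_powersetCard_exists_forall_eq_and_exists_forall_eq prev f two_ne_zero]
    refine sum_le_sum fun c _ => ?_
    have hbound := card_sub_le_sum_choose_two_of_forall_ne f c (t := {a | prev a = c})
      fun a ha => (mem_filter.mp ha).2 ▸ hf a
    simpa [hn, filter_filter] using hbound
  · refine ⟨fun a => a.1.succAbove (Fin.ofNat 29 a.2), fun a => Fin.succAbove_ne _ _, ?_⟩
    rw [card_filter_powersetCard_exists_forall_eq_and_exists_forall_eq _ _ two_ne_zero]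
    refine sum_congr rfl fun c _ => ?_
    simp only [card_filter_sigma_fst_eq_and]
    rw [sum_choose_two_card_filter_succAbove_ofNat (h29 c) (h58 c), max_eq_left (Nat.zero_le _)]
end
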